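/- Let N ≥ 2, X ⊂ ℝ² a nonempty compact convex centrally symmetric set (X = −X), θ_i = (i−1)π/N, and X_0^{(N)} the unique zonotope ⊕ α_i S_{θ_i} with H_{X_0^{(N)}}(θ_i) = H_X(θ_i) for all i. Then d_H(X, X_0^{(N)}) ≤ (6 + 2√2)·sin(π/(2N))·diam(X), where diam(X) = sup_θ H_X(θ); in particular d_H(X, X_0^{(N)}) → 0 as N → ∞. -/

import Mathlib

open Real Pointwise MeasureTheory

/-- Points of the Euclidean plane. -/
abbrev Pt := EuclideanSpace ℝ (Fin 2)

noncomputable def mk2 (a b : ℝ) : Pt := (WithLp.equiv 2 (Fin 2 → ℝ)).symm ![a, b]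

/-- Support function `f_X(x) = sup_{s ∈ X} ⟨x, s⟩`. -/
noncomputable def fS (X : Set Pt) (x : Pt) : ℝ :=
  sSup ((fun s => (inner ℝ x s : ℝ)) '' X)

/-- Direction vector `(-sin θ, cos θ)`. -/
noncomputable def dir (θ : ℝ) : Pt := mk2 (-Real.sin θ) (Real.cos θ)

/-- Support function in direction θ. -/
noncomputable def hF (X : Set Pt) (θ : ℝ) : ℝ := fS X (dir θ)

/-- The Feret diameter `H_X(θ) = h_X(θ) + h_{-X}(θ)`. -/
noncomputable def feret (X : Set Pt) (θ : ℝ) : ℝ := hF X θ + hF (-X) θ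

/-- The segment with endpoints `±½(cos θ, sin θ)`. -/
noncomputable def seg (θ : ℝ) : Set Pt :=
  segment ℝ (-mk2 (Real.cos θ / 2) (Real.sin θ / 2)) (mk2 (Real.cos θ / 2) (Real.sin θ / 2))

/-!
For a centrally symmetric compact convex set `Y` the Feret diameter is `2 h_Y`, the support
function `h_Y(θ)` is `π`-periodic, and it is Lipschitz in `θ` with constant the radius of a ball
about `0` containing `Y`. With `D = sup H_X`, the set `X` lies in the ball of radius `D / 2`, and the
zonotope in the ball of radius `∑ αᵢ / 2`. Comparing the widths of the zonotope in two grid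
directions at an angle of at least `π / 6` gives `∑ αᵢ ≤ 4 D`. As `h_X` and `h_{X0}` agree on the
grid of step `π / N`, they differ by at most `(5 D / 2) · π / (2 N)`, which Jordan's inequality
bounds by `(5 π / 4) sin (π / (2 N)) D`. Finally, the sup-distance of support functions of
compact convex sets bounds their Hausdorff distance.
-/

open scoped RealInnerProductSpace

lemma inner_mk2 (a b c d : ℝ) : ⟪mk2 a b, mk2 c d⟫ = a * c + b * d := by
  simp [mk2, PiLp.inner_apply, Fin.sum_univ_two, mul_comm]

lemma inner_dir_dir (θ φ : ℝ) : ⟪dir θ, dir φ⟫ = cos (θ - φ) := by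
  rw [dir, dir, inner_mk2, cos_sub]
  ring

lemma norm_dir (θ : ℝ) : ‖dir θ‖ = 1 := by
  rw [norm_eq_sqrt_real_inner, inner_dir_dir, sub_self, cos_zero, sqrt_one]

lemma dir_add_pi (θ : ℝ) : dir (θ + π) = -dir θ := by
  ext i; fin_cases i <;> simp [dir, mk2]

lemma norm_dir_sub_dir_le (θ φ : ℝ) : ‖dir θ - dir φ‖ ≤ |θ - φ| := by
  refine (pow_le_pow_iff_left₀ (norm_nonneg _) (abs_nonneg _) two_ne_zero).1 ?_
  rw [norm_sub_sq_real, norm_dir, norm_dir, inner_dir_dir, sq_abs]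
  nlinarith [one_sub_sq_div_two_le_cos (x := θ - φ)]

lemma exists_dir_eq {u : Pt} (hu : ‖u‖ = 1) : ∃ θ, dir θ = u := by
  obtain ⟨θ, hθ⟩ := (Complex.norm_eq_one_iff ⟨u 1, -u 0⟩).1 (by
    rw [← hu, EuclideanSpace.norm_eq, Complex.norm_def, Complex.normSq_mk, Fin.sum_univ_two]
    simp [sq, add_comm])
  refine ⟨θ, ?_⟩
  have hre := congrArg Complex.re hθ
  have him := congrArg Complex.im hθ
  simp only [Complex.exp_ofReal_mul_I_re, Complex.exp_ofReal_mul_I_im] at hre him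
  ext i; fin_cases i <;> simp [dir, mk2, hre, him]

section SupportFunction

variable {Y : Set Pt}

lemma le_fS (hY : IsCompact Y) {s : Pt} (hs : s ∈ Y) (u : Pt) : ⟪u, s⟫ ≤ fS Y u :=
  le_csSup (hY.bddAbove_image (continuous_const.inner continuous_id).continuousOn)
    (Set.mem_image_of_mem _ hs)

lemma fS_le (hne : Y.Nonempty) {u : Pt} {c : ℝ} (h : ∀ s ∈ Y, ⟪u, s⟫ ≤ c) : fS Y u ≤ c :=
  csSup_le (hne.image _) (Set.forall_mem_image.2 h)

lemma fS_sub_fS_le (hY : IsCompact Y) (hne : Y.Nonempty) {R : ℝ}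
    (hR : Y ⊆ Metric.closedBall 0 R) (u v : Pt) : fS Y u - fS Y v ≤ R * ‖u - v‖ := by
  suffices fS Y u ≤ fS Y v + R * ‖u - v‖ by linarith
  refine fS_le hne fun s hs => ?_
  have hs' : ‖s‖ ≤ R := by simpa using hR hs
  calc ⟪u, s⟫ = ⟪v, s⟫ + ⟪u - v, s⟫ := by rw [inner_sub_left]; ring
    _ ≤ fS Y v + ‖u - v‖ * ‖s‖ := add_le_add (le_fS hY hs v) (real_inner_le_norm _ _)
    _ ≤ fS Y v + R * ‖u - v‖ := by nlinarith [norm_nonneg (u - v)]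

lemma fS_neg (Y : Set Pt) (u : Pt) : fS (-Y) u = fS Y (-u) := by
  rw [fS, fS, ← Set.image_neg_eq_neg, Set.image_image]
  simp only [inner_neg_right, inner_neg_left]

/-- Projecting `x` onto `Y`, the unit vector from the projection to `x` is a direction in which
`x` exceeds the support function of `Y` by exactly `infDist x Y`. -/
lemma infDist_le_of_inner_le_fS_add (hY : IsCompact Y) (hYc : Convex ℝ Y) (hne : Y.Nonempty)
    {x : Pt} {r : ℝ} (hr : 0 ≤ r) (h : ∀ u : Pt, ‖u‖ = 1 → ⟪u, x⟫ ≤ fS Y u + r) :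
    Metric.infDist x Y ≤ r := by
  obtain ⟨y, hyY, hy⟩ := hY.exists_infDist_eq_dist hne x
  rw [hy, dist_eq_norm]
  rcases eq_or_ne x y with rfl | hxy
  · simpa using hr
  have hpos : 0 < ‖x - y‖ := norm_pos_iff.2 (sub_ne_zero.2 hxy)
  set u : Pt := ‖x - y‖⁻¹ • (x - y)
  have hu : ‖u‖ = 1 := by
    rw [norm_smul, norm_inv, norm_norm, inv_mul_cancel₀ hpos.ne']
  have hproj : ‖x - y‖ = ⨅ w : Y, ‖x - w‖ := by
    simp_rw [← dist_eq_norm, ← Metric.infDist_eq_iInf, hy]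
  have hobtuse := (norm_eq_iInf_iff_real_inner_le_zero hYc hyY).1 hproj
  have hfS : fS Y u ≤ ⟪u, y⟫ := fS_le hne fun w hw => by
    have : ⟪u, w⟫ - ⟪u, y⟫ = ‖x - y‖⁻¹ * ⟪x - y, w - y⟫ := by
      rw [real_inner_smul_left, real_inner_smul_left, ← mul_sub, inner_sub_right]
    nlinarith [mul_nonpos_of_nonneg_of_nonpos (inv_nonneg.2 hpos.le) (hobtuse w hw)]
  have hux : ⟪u, x⟫ - ⟪u, y⟫ = ‖x - y‖ := by
    rw [← inner_sub_right, real_inner_smul_left, real_inner_self_eq_norm_mul_norm,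
      inv_mul_cancel_left₀ hpos.ne']
  linarith [h u hu]

end SupportFunction

section SupportFunctionAngle

variable {Y : Set Pt}

lemma abs_hF_sub_hF_le (hY : IsCompact Y) (hne : Y.Nonempty) {R : ℝ}
    (hR : Y ⊆ Metric.closedBall 0 R) (θ φ : ℝ) : |hF Y θ - hF Y φ| ≤ R * |θ - φ| := by
  obtain ⟨s, hs⟩ := hne
  have hR0 : 0 ≤ R := (norm_nonneg s).trans (by simpa using hR hs)
  have hdir := mul_le_mul_of_nonneg_left (norm_dir_sub_dir_le θ φ) hR0
  refine abs_sub_le_iff.2 ⟨?_, ?_⟩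
  · exact (fS_sub_fS_le hY ⟨s, hs⟩ hR _ _).trans hdir
  · exact (fS_sub_fS_le hY ⟨s, hs⟩ hR _ _).trans (by rwa [norm_sub_rev])

lemma subset_closedBall_of_hF_le (hY : IsCompact Y) {R : ℝ} (h : ∀ θ, hF Y θ ≤ R) :
    Y ⊆ Metric.closedBall 0 R := by
  intro s hs
  rw [mem_closedBall_zero_iff]
  rcases eq_or_ne s 0 with rfl | hs0
  · simpa using (le_fS hY hs (dir 0)).trans (h 0)
  have hpos : 0 < ‖s‖ := norm_pos_iff.2 hs0
  obtain ⟨θ, hθ⟩ := exists_dir_eq (u := ‖s‖⁻¹ • s) (by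
    rw [norm_smul, norm_inv, norm_norm, inv_mul_cancel₀ hpos.ne'])
  have hinner : ⟪dir θ, s⟫ = ‖s‖ := by
    rw [hθ, real_inner_smul_left, real_inner_self_eq_norm_mul_norm, inv_mul_cancel_left₀ hpos.ne']
  exact hinner ▸ (le_fS hY hs (dir θ)).trans (h θ)

lemma hF_le_of_subset_closedBall (hne : Y.Nonempty) {R : ℝ} (hR : Y ⊆ Metric.closedBall 0 R)
    (θ : ℝ) : hF Y θ ≤ R :=
  fS_le hne fun s hs => (real_inner_le_norm _ s).trans <| by simpa [norm_dir] using hR hs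

lemma hF_add_pi (hsym : Y = -Y) (θ : ℝ) : hF Y (θ + π) = hF Y θ := by
  rw [hF, hF, dir_add_pi]
  conv_rhs => rw [hsym, fS_neg]

lemma feret_eq_two_mul_hF (hsym : Y = -Y) (θ : ℝ) : feret Y θ = 2 * hF Y θ := by
  rw [feret, hF, hF, fS_neg, ← hF, ← dir_add_pi, ← hF, hF_add_pi hsym]
  ring

lemma feret_le_iSup_feret (hY : IsCompact Y) (hne : Y.Nonempty) (hsym : Y = -Y) (θ : ℝ) :
    feret Y θ ≤ ⨆ φ, feret Y φ := by
  obtain ⟨R, hR⟩ := hY.isBounded.subset_closedBall 0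
  refine le_ciSup ⟨2 * R, ?_⟩ θ
  rintro _ ⟨φ, rfl⟩
  linarith [feret_eq_two_mul_hF hsym φ, hF_le_of_subset_closedBall hne hR φ]

lemma subset_closedBall_iSup_feret_div_two (hY : IsCompact Y) (hne : Y.Nonempty)
    (hsym : Y = -Y) : Y ⊆ Metric.closedBall 0 ((⨆ φ, feret Y φ) / 2) :=
  subset_closedBall_of_hF_le hY fun θ => by
    linarith [feret_le_iSup_feret hY hne hsym θ, feret_eq_two_mul_hF hsym θ]

lemma hausdorffDist_le_of_abs_hF_sub_le {Z : Set Pt} (hY : IsCompact Y) (hYc : Convex ℝ Y)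
    (hYne : Y.Nonempty) (hZ : IsCompact Z) (hZc : Convex ℝ Z) (hZne : Z.Nonempty) {r : ℝ}
    (h : ∀ θ, |hF Y θ - hF Z θ| ≤ r) : Metric.hausdorffDist Y Z ≤ r := by
  have hr : 0 ≤ r := (abs_nonneg _).trans (h 0)
  have h' θ := abs_sub_le_iff.1 (h θ)
  unfold hF at h'
  refine Metric.hausdorffDist_le_of_infDist hr (fun x hx => ?_) (fun x hx => ?_)
  · refine infDist_le_of_inner_le_fS_add hZ hZc hZne hr fun u hu => ?_
    obtain ⟨θ, rfl⟩ := exists_dir_eq hu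
    linarith [le_fS hY hx (dir θ), (h' θ).1]
  · refine infDist_le_of_inner_le_fS_add hY hYc hYne hr fun u hu => ?_
    obtain ⟨θ, rfl⟩ := exists_dir_eq hu
    linarith [le_fS hZ hx (dir θ), (h' θ).2]

end SupportFunctionAngle

section Zonotope

lemma inner_dir_mk2_cos_sin (θ ψ : ℝ) :
    ⟪dir θ, mk2 (cos ψ / 2) (sin ψ / 2)⟫ = sin (ψ - θ) / 2 := by
  rw [dir, inner_mk2, sin_sub]
  ring

lemma norm_mk2_cos_sin (ψ : ℝ) : ‖mk2 (cos ψ / 2) (sin ψ / 2)‖ = 1 / 2 := by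
  rw [norm_eq_sqrt_real_inner, inner_mk2, show cos ψ / 2 * (cos ψ / 2) + sin ψ / 2 * (sin ψ / 2)
    = (1 / 2) ^ 2 by nlinarith [sin_sq_add_cos_sq ψ], sqrt_sq (by norm_num)]

lemma isCompact_seg (ψ : ℝ) : IsCompact (seg ψ) := by
  rw [seg, ← convexHull_pair (𝕜 := ℝ)]
  exact (Set.toFinite _).isCompact_convexHull ℝ

lemma neg_seg (ψ : ℝ) : -seg ψ = seg ψ := by
  rw [seg, ← Set.image_neg_eq_neg]
  exact (image_segment ℝ (-LinearMap.id : Pt →ₗ[ℝ] Pt).toAffineMap _ _).trans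
    (by simpa using segment_symm ℝ _ _)

lemma seg_subset_closedBall (ψ : ℝ) : seg ψ ⊆ Metric.closedBall 0 (1 / 2) :=
  (convex_closedBall _ _).segment_subset (by simp [norm_mk2_cos_sin])
    (by simp [norm_mk2_cos_sin])

variable {ι : Type*} [Fintype ι]

def zonotope (α θ : ι → ℝ) : Set Pt := ∑ i, α i • seg (θ i)

variable (α θ : ι → ℝ)

lemma isCompact_zonotope : IsCompact (zonotope α θ) :=
  Finset.sum_induction _ IsCompact (fun _ _ => IsCompact.add) (by simp)
    fun i _ => (isCompact_seg (θ i)).smul (α i)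

lemma convex_zonotope : Convex ℝ (zonotope α θ) :=
  convex_sum _ fun i _ => (convex_segment _ _).smul (α i)

lemma zonotope_nonempty : (zonotope α θ).Nonempty :=
  ⟨_, Set.finsetSum_mem_finsetSum _ _ _ fun i _ =>
    Set.smul_mem_smul_set (right_mem_segment ℝ _ (mk2 (cos (θ i) / 2) (sin (θ i) / 2)))⟩

lemma zonotope_eq_neg : zonotope α θ = -zonotope α θ := by
  rw [zonotope, ← Finset.sum_neg_distrib]
  simp_rw [← Set.smul_set_neg, neg_seg]

lemma zonotope_subset_closedBall {α : ι → ℝ} (hα : ∀ i, 0 ≤ α i) :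
    zonotope α θ ⊆ Metric.closedBall 0 ((∑ i, α i) / 2) := by
  intro x hx
  obtain ⟨g, hg, rfl⟩ := (Set.mem_fintype_sum _ _).1 hx
  rw [mem_closedBall_zero_iff, Finset.sum_div]
  refine (norm_sum_le _ _).trans (Finset.sum_le_sum fun i _ => ?_)
  obtain ⟨s, hs, hgi⟩ := hg i
  have : ‖s‖ ≤ 1 / 2 := by simpa using seg_subset_closedBall (θ i) hs
  rw [← hgi, norm_smul, Real.norm_of_nonneg (hα i)]
  nlinarith [hα i]

/-- Pick in each summand the endpoint on the far side in the direction `dir φ`. -/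
lemma sum_mul_abs_sin_le_feret_zonotope (φ : ℝ) :
    ∑ i, α i * |sin (θ i - φ)| ≤ feret (zonotope α θ) φ := by
  classical
  let p i := mk2 (cos (θ i) / 2) (sin (θ i) / 2)
  let g i := if 0 ≤ sin (θ i - φ) then α i • p i else α i • -p i
  have hg : ∑ i, g i ∈ zonotope α θ := Set.finsetSum_mem_finsetSum _ _ _ fun i _ => by
    by_cases h : 0 ≤ sin (θ i - φ)
    · simp only [g, h, if_true]
      exact Set.smul_mem_smul_set (right_mem_segment ℝ _ _)
    · simp only [g, h, if_false]
      exact Set.smul_mem_smul_set (left_mem_segment ℝ _ _)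
  have hinner i : ⟪dir φ, g i⟫ = α i * |sin (θ i - φ)| / 2 := by
    by_cases h : 0 ≤ sin (θ i - φ)
    · simp only [g, h, if_true, real_inner_smul_right, p, inner_dir_mk2_cos_sin, abs_of_nonneg h]
      ring
    · simp only [g, h, if_false, real_inner_smul_right, inner_neg_right, p,
        inner_dir_mk2_cos_sin, abs_of_neg (not_le.1 h)]
      ring
  have hle := le_fS (isCompact_zonotope α θ) hg (dir φ)
  rw [inner_sum, Finset.sum_congr rfl fun i _ => hinner i, ← Finset.sum_div] at hle
  rw [feret_eq_two_mul_hF (zonotope_eq_neg α θ)]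
  exact (div_le_iff₀' two_pos).1 hle

lemma abs_sin_sub_le_abs_sin_add_abs_sin (x a b : ℝ) :
    |sin (a - b)| ≤ |sin (x - a)| + |sin (x - b)| := by
  have h : sin (a - b) = sin (x - b) * cos (x - a) - cos (x - b) * sin (x - a) := by
    rw [← sin_sub]; ring_nf
  rw [h]
  refine (abs_sub _ _).trans ?_
  rw [abs_mul, abs_mul, add_comm |sin (x - a)|]
  gcongr
  · exact mul_le_of_le_one_right (abs_nonneg _) (abs_cos_le_one _)
  · exact mul_le_of_le_one_left (abs_nonneg _) (abs_cos_le_one _)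

lemma abs_sin_sub_mul_sum_le_feret_add_feret {α : ι → ℝ} (hα : ∀ i, 0 ≤ α i) (a b : ℝ) :
    |sin (a - b)| * ∑ i, α i ≤ feret (zonotope α θ) a + feret (zonotope α θ) b := by
  refine le_trans ?_ (add_le_add (sum_mul_abs_sin_le_feret_zonotope α θ a)
    (sum_mul_abs_sin_le_feret_zonotope α θ b))
  rw [Finset.mul_sum, ← Finset.sum_add_distrib]
  refine Finset.sum_le_sum fun i _ => ?_
  nlinarith [abs_sin_sub_le_abs_sin_add_abs_sin (θ i) a b, hα i]

end Zonotope

lemma abs_sub_le_of_lipschitz_of_eq_on_int_mul {f g : ℝ → ℝ} {K L h : ℝ} (hh : 0 < h)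
    (hf : ∀ x y, |f x - f y| ≤ K * |x - y|) (hg : ∀ x y, |g x - g y| ≤ L * |x - y|)
    (hfg : ∀ m : ℤ, f (m * h) = g (m * h)) (x : ℝ) : |f x - g x| ≤ (K + L) * h / 2 := by
  have hKL : 0 ≤ K + L := by
    have := add_le_add ((abs_nonneg _).trans (hf h 0)) ((abs_nonneg _).trans (hg h 0))
    rw [add_zero, sub_zero, abs_of_pos hh, ← add_mul] at this
    exact nonneg_of_mul_nonneg_left this hh
  set m := round (x / h)
  have hm : |x - m * h| ≤ h / 2 := by
    rw [show x - m * h = (x / h - m) * h by field_simp, abs_mul, abs_of_pos hh]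
    nlinarith [abs_sub_round (x / h)]
  calc |f x - g x| = |(f x - f (m * h)) - (g x - g (m * h))| := by rw [hfg]; ring_nf
    _ ≤ |f x - f (m * h)| + |g x - g (m * h)| := abs_sub _ _
    _ ≤ (K + L) * |x - m * h| := by linarith [hf x (m * h), hg x (m * h)]
    _ ≤ (K + L) * (h / 2) := by gcongr
    _ = (K + L) * h / 2 := by ring

lemma hF_eq_hF_of_feret_eq {Y Z : Set Pt} (hY : Y = -Y) (hZ : Z = -Z) {N : ℕ} (hN : 0 < N)
    (h : ∀ i : Fin N, feret Y ((i : ℝ) * π / N) = feret Z ((i : ℝ) * π / N)) (m : ℤ) :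
    hF Y (m * (π / N)) = hF Z (m * (π / N)) := by
  have hper {W : Set Pt} (hW : W = -W) : hF W (m * (π / N)) = hF W ((m % N).toNat * π / N) := by
    have hm : (m : ℝ) * (π / N) = ((m % N).toNat * π / N) + (m / N : ℤ) * π := by
      have hr : ((m % N).toNat : ℝ) = ((m % N : ℤ) : ℝ) := by
        exact_mod_cast Int.toNat_of_nonneg (Int.emod_nonneg m (by exact_mod_cast hN.ne'))
      rw [hr]
      field_simp
      exact_mod_cast (Int.emod_add_mul_ediv m N).symm
    rw [hm, Function.Periodic.int_mul (hF_add_pi hW)]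
  have hi : (m % N).toNat < N := by
    have := Int.emod_lt_of_pos m (b := N) (by omega)
    omega
  have hgrid := h ⟨_, hi⟩
  rw [feret_eq_two_mul_hF hY, feret_eq_two_mul_hF hZ] at hgrid
  rw [hper hY, hper hZ]
  simpa using hgrid

lemma one_half_le_sin_div_two_mul_pi_div (N : ℕ) (hN : 2 ≤ N) :
    1 / 2 ≤ sin ((N / 2 : ℕ) * π / N) := by
  have hN0 : (0 : ℝ) < N := by positivity
  rw [← sin_pi_div_six]
  apply sin_le_sin_of_le_of_le_pi_div_two (by linarith [pi_pos])
  · rw [div_le_div_iff₀ hN0 two_pos]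
    nlinarith [pi_pos, show (2 * (N / 2 : ℕ) : ℝ) ≤ N by exact_mod_cast Nat.mul_div_le N 2]
  · rw [div_le_div_iff₀ (by norm_num) hN0]
    have h3 : (N : ℝ) ≤ 3 * (N / 2 : ℕ) := by exact_mod_cast (by omega : N ≤ 3 * (N / 2))
    nlinarith [pi_pos]

lemma one_le_mul_sin_pi_div_two_mul_self (N : ℕ) (hN : 1 ≤ N) : 1 ≤ N * sin (π / (2 * N)) := by
  have hN0 : (0 : ℝ) < N := by positivity
  have := mul_le_sin (x := π / (2 * N)) (by positivity) (by
    rw [div_le_div_iff₀ (by positivity) two_pos]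
    nlinarith [pi_pos, show (1 : ℝ) ≤ N by exact_mod_cast hN])
  rw [show 2 / π * (π / (2 * N)) = 1 / N by field_simp] at this
  rwa [div_le_iff₀' hN0] at this

lemma sum_le_four_mul_of_feret_le {N : ℕ} (hN : 2 ≤ N) {α : Fin N → ℝ} (hα : ∀ i, 0 ≤ α i)
    {D : ℝ} (h : ∀ i : Fin N,
      feret (zonotope α fun i : Fin N => (i : ℝ) * π / N) ((i : ℝ) * π / N) ≤ D) :
    ∑ i, α i ≤ 4 * D := by
  have hsin := one_half_le_sin_div_two_mul_pi_div N hN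
  have hab := abs_sin_sub_mul_sum_le_feret_add_feret (fun i : Fin N => (i : ℝ) * π / N) hα
    ((N / 2 : ℕ) * π / N) 0
  rw [sub_zero, abs_of_pos (by linarith)] at hab
  have hmid : feret _ ((N / 2 : ℕ) * π / N) ≤ D := h ⟨N / 2, by omega⟩
  have hzero : feret (zonotope α fun i : Fin N => (i : ℝ) * π / N) 0 ≤ D := by
    simpa using h ⟨0, by omega⟩
  nlinarith [mul_le_mul_of_nonneg_right hsin (Finset.univ.sum_nonneg fun i _ => hα i)]

theorem hausdorff_approx0_le (N : ℕ) (hN : 2 ≤ N) (X : Set Pt)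
    (hne : X.Nonempty) (hcomp : IsCompact X) (hconv : Convex ℝ X) (hsym : X = -X)
    (α : Fin N → ℝ) (hα : ∀ i, 0 ≤ α i) (X0 : Set Pt)
    (hX0 : X0 = ∑ i : Fin N, α i • seg ((i : ℝ) * π / N))
    (hferet : ∀ i : Fin N, feret X0 ((i : ℝ) * π / N) = feret X ((i : ℝ) * π / N)) :
    Metric.hausdorffDist X X0 ≤
      (6 + 2 * Real.sqrt 2) * Real.sin (π / (2 * N)) * ⨆ θ : ℝ, feret X θ := by
  set θs : Fin N → ℝ := fun i => (i : ℝ) * π / N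
  replace hX0 : X0 = zonotope α θs := hX0
  subst hX0
  set D := ⨆ θ : ℝ, feret X θ
  have hXball := subset_closedBall_iSup_feret_div_two hcomp hne hsym
  have hD : 0 ≤ D := by
    obtain ⟨s, hs⟩ := hne
    linarith [norm_nonneg s, mem_closedBall_zero_iff.1 (hXball hs)]
  have hS : ∑ i, α i ≤ 4 * D := sum_le_four_mul_of_feret_le hN hα fun i =>
    (hferet i).trans_le (feret_le_iSup_feret hcomp hne hsym _)
  have hpt θ := abs_sub_le_of_lipschitz_of_eq_on_int_mul (by positivity : 0 < π / N)
    (abs_hF_sub_hF_le hcomp hne hXball)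
    (abs_hF_sub_hF_le (isCompact_zonotope α θs) (zonotope_nonempty α θs)
      (zonotope_subset_closedBall θs hα))
    (hF_eq_hF_of_feret_eq hsym (zonotope_eq_neg α θs) (by omega) fun i => (hferet i).symm) θ
  refine hausdorffDist_le_of_abs_hF_sub_le hcomp hconv hne (isCompact_zonotope α θs)
    (convex_zonotope α θs) (zonotope_nonempty α θs) fun θ => (hpt θ).trans ?_
  have hsin := one_le_mul_sin_pi_div_two_mul_self N (by omega)
  calc (D / 2 + (∑ i, α i) / 2) * (π / N) / 2 = (D + ∑ i, α i) * π / (4 * N) := by ring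
    _ ≤ 5 * D * π / (4 * N) := by gcongr; linarith
    _ ≤ (6 + 2 * Real.sqrt 2) * Real.sin (π / (2 * N)) * D := by
        rw [div_le_iff₀ (by positivity)]
        nlinarith [mul_le_mul_of_nonneg_left hsin hD, pi_lt_d2,
          mul_nonneg (mul_nonneg (Real.sqrt_nonneg 2) hD) (zero_le_one.trans hsin)]
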